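/- Every element w of the Weyl group W of a root system Φ can be written as w = s_{β_l} ⋯ s_{β_2} s_{β_1} for some pairwise distinct positive roots β_1, …, β_l ∈ Φ⁺. -/

import Mathlib

open scoped InnerProductSpace Classical
open Finset

variable {E : Type*} [NormedAddCommGroup E] [InnerProductSpace ℝ E]

/-- The Cartan pairing `⟨ν, α∨⟩ = 2⟪ν,α⟫/⟪α,α⟫`. -/
noncomputable def pairW (ν α : E) : ℝ := 2 * ⟪ν, α⟫_ℝ / ⟪α, α⟫_ℝ

/-- The reflection `s_α`. -/
noncomputable def reflW (α : E) (v : E) : E := v - pairW v α • α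

/-- The product of the reflections attached to a list of roots. -/
noncomputable def wprod (l : List E) : E → E := l.foldr (fun α f => reflW α ∘ f) id

/-- Membership in the group generated by the reflections `s_α`, `α ∈ R`. -/
def memW (R : Finset E) (w : E → E) : Prop :=
  ∃ l : List E, (∀ α ∈ l, α ∈ R) ∧ w = wprod l

/-- Length with respect to the reflections attached to the set `S` (of simple roots). -/
noncomputable def lenW (S : Finset E) (w : E → E) : ℕ :=
  sInf {n | ∃ l : List E, (∀ α ∈ l, α ∈ S) ∧ l.length = n ∧ w = wprod l}

/-- The simple (indecomposable) roots of a positive system `P`. -/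
noncomputable def simplesOf (P : Finset E) : Finset E :=
  P.filter (fun α => ¬ ∃ β ∈ P, ∃ γ ∈ P, α = β + γ)

/-- The Bruhat order on the reflection group with reflections from `R` and length
measured with respect to the simple system `S`:  `x ≤ w` iff there is a chain of
length-increasing multiplications by reflections from `x` to `w`. -/
noncomputable def bruhatLE (R S : Finset E) : (E → E) → (E → E) → Prop :=
  Relation.ReflTransGen (fun x y => (∃ α ∈ R, y = reflW α ∘ x) ∧ lenW S x < lenW S y)

/-- Half sum of the elements of `P`. -/
noncomputable def halfSum (P : Finset E) : E := (2:ℝ)⁻¹ • ∑ α ∈ P, α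

/-- `ν ≤ η` iff `η - ν` is a nonnegative integral combination of the simple roots `Δ`. -/
def wtle (Δ : Finset E) (ν η : E) : Prop :=
  ∃ c : E → ℕ, η - ν = ∑ α ∈ Δ, (c α : ℝ) • α

/-- `Φ_{[λ]}`, the set of roots with integral pairing against `lam`. -/
noncomputable def intSet (lam : E) (Φ : Finset E) : Finset E :=
  Φ.filter (fun α => ∃ n : ℤ, pairW lam α = (n : ℝ))

/-- Axioms for a finite crystallographic root system `Φ` with positive system `Φpos`. -/
structure IsRootSystem (Φ Φpos : Finset E) : Prop where
  zero_not_mem : (0:E) ∉ Φ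
  pos_subset : Φpos ⊆ Φ
  pos_or_neg : ∀ α ∈ Φ, (α ∈ Φpos ↔ -α ∉ Φpos)
  neg_mem : ∀ α ∈ Φ, -α ∈ Φ
  refl_mem : ∀ α ∈ Φ, ∀ β ∈ Φ, reflW β α ∈ Φ
  crystallographic : ∀ α ∈ Φ, ∀ β ∈ Φ, ∃ n : ℤ, pairW α β = (n : ℝ)

/-- `μ` is antidominant: `⟨μ+ρ, α∨⟩` is not a positive integer for any positive root. -/
noncomputable def IsAntidominant (Φpos : Finset E) (μ : E) : Prop :=
  ∀ α ∈ Φpos, ¬ ∃ n : ℤ, 0 < n ∧ pairW (μ + halfSum Φpos) α = (n : ℝ)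

/-- `ν` is `[λ]`-strongly linked to `η` (with respect to positive roots `Ppos` of
`Φ_{[λ]}`, simple roots `Δ` of `Φ` and `ρ`). -/
noncomputable def strongLink (Ppos Δ : Finset E) (ρ : E) : E → E → Prop :=
  Relation.ReflTransGen
    (fun ν η => (∃ α ∈ Ppos, ν = reflW α (η + ρ) - ρ) ∧ wtle Δ ν η)


lemma reflW_neg (β : E) : reflW (-β) = reflW β := by
  funext v
  simp only [reflW, pairW, inner_neg_neg, inner_neg_right, inner_neg_left, smul_neg,
    neg_smul, neg_neg, mul_neg, neg_div]

lemma reflW_sq {β : E} (hβ : ⟪β, β⟫_ℝ ≠ 0) (v : E) : reflW β (reflW β v) = v := by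
  simp only [reflW, pairW, inner_sub_left, real_inner_smul_left]
  rw [sub_sub, ← add_smul]
  have : 2 * ⟪v, β⟫_ℝ / ⟪β, β⟫_ℝ +
      2 * (⟪v, β⟫_ℝ - 2 * ⟪v, β⟫_ℝ / ⟪β, β⟫_ℝ * ⟪β, β⟫_ℝ) / ⟪β, β⟫_ℝ = 0 := by
    field_simp
    ring
  rw [this, zero_smul, sub_zero]

lemma reflW_inner {β : E} (hβ : ⟪β, β⟫_ℝ ≠ 0) (x y : E) :
    ⟪reflW β x, reflW β y⟫_ℝ = ⟪x, y⟫_ℝ := by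
  simp only [reflW, pairW, inner_sub_left, inner_sub_right, real_inner_smul_left,
    real_inner_smul_right]
  rw [real_inner_comm β x, real_inner_comm β y]
  field_simp
  ring

lemma reflW_sub_smul (β x y : E) (t : ℝ) :
    reflW β (x - t • y) = reflW β x - t • reflW β y := by
  simp only [reflW, pairW, inner_sub_left, real_inner_smul_left]
  have : 2 * (⟪x, β⟫_ℝ - t * ⟪y, β⟫_ℝ) / ⟪β, β⟫_ℝ
      = 2 * ⟪x, β⟫_ℝ / ⟪β, β⟫_ℝ - t * (2 * ⟪y, β⟫_ℝ / ⟪β, β⟫_ℝ) := by ring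
  rw [this]
  module

lemma pairW_reflW {β : E} (hβ : ⟪β, β⟫_ℝ ≠ 0) (x y : E) :
    pairW (reflW β x) (reflW β y) = pairW x y := by
  simp only [pairW, reflW_inner hβ]

lemma reflW_conj {β : E} (hβ : ⟪β, β⟫_ℝ ≠ 0) (γ : E) :
    reflW β ∘ reflW γ = reflW (reflW β γ) ∘ reflW β := by
  funext v
  simp only [Function.comp_apply]
  calc reflW β (reflW γ v) = reflW β v - pairW v γ • reflW β γ := reflW_sub_smul β v γ _
    _ = reflW β v - pairW (reflW β v) (reflW β γ) • reflW β γ := by rw [pairW_reflW hβ]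
    _ = reflW (reflW β γ) (reflW β v) := rfl

lemma wprod_cons (a : E) (l : List E) : wprod (a :: l) = reflW a ∘ wprod l := rfl

lemma wprod_append (u v : List E) : wprod (u ++ v) = wprod u ∘ wprod v := by
  induction u with
  | nil => rfl
  | cons a u ih => rw [List.cons_append, wprod_cons, ih, wprod_cons]; rfl

lemma reflW_wprod_conj {β : E} (hβ : ⟪β, β⟫_ℝ ≠ 0) (u : List E) :
    reflW β ∘ wprod u = wprod (u.map (reflW β)) ∘ reflW β := by
  induction u with
  | nil => rfl
  | cons a u ih =>
    rw [List.map_cons, wprod_cons, wprod_cons]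
    calc reflW β ∘ (reflW a ∘ wprod u) = (reflW β ∘ reflW a) ∘ wprod u := rfl
      _ = (reflW (reflW β a) ∘ reflW β) ∘ wprod u := by rw [reflW_conj hβ]
      _ = reflW (reflW β a) ∘ (reflW β ∘ wprod u) := rfl
      _ = reflW (reflW β a) ∘ (wprod (u.map (reflW β)) ∘ reflW β) := by rw [ih]
      _ = (reflW (reflW β a) ∘ wprod (u.map (reflW β))) ∘ reflW β := rfl

lemma wprod_cancel {β : E} (hβ : ⟪β, β⟫_ℝ ≠ 0) (u v : List E) :
    reflW β ∘ wprod (u ++ β :: v) = wprod (u.map (reflW β) ++ v) := by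
  rw [wprod_append, wprod_cons, wprod_append]
  funext x
  have hc := congrFun (reflW_wprod_conj hβ u) (reflW β (wprod v x))
  simp only [Function.comp_apply] at hc ⊢
  rw [reflW_sq hβ] at hc
  exact hc

lemma key_lemma {Φ Φpos : Finset E} (hRS : IsRootSystem Φ Φpos) :
    ∀ n (l : List E), l.length ≤ n → (∀ α ∈ l, α ∈ Φ) →
    ∃ l' : List E, l'.Nodup ∧ (∀ β ∈ l', β ∈ Φpos) ∧ wprod l = wprod l' ∧
      l'.length ≤ l.length := by
  intro n
  induction n with
  | zero =>
    intro l hl _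
    have h0 : l = [] := List.eq_nil_of_length_eq_zero (Nat.le_zero.mp hl)
    exact ⟨[], List.nodup_nil, by simp, by rw [h0], by simp [h0]⟩
  | succ n ih =>
    intro l hl hmem
    match l with
    | [] => exact ⟨[], List.nodup_nil, by simp, rfl, le_refl _⟩
    | a :: t =>
      have haΦ : a ∈ Φ := hmem a List.mem_cons_self
      obtain ⟨a', ha'pos, ha'refl⟩ : ∃ a', a' ∈ Φpos ∧ reflW a' = reflW a := by
        by_cases h : a ∈ Φpos
        · exact ⟨a, h, rfl⟩
        · have hna : -a ∈ Φpos := by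
            by_contra hn; exact h ((hRS.pos_or_neg a haΦ).mpr hn)
          exact ⟨-a, hna, reflW_neg a⟩
      have ha'Φ : a' ∈ Φ := hRS.pos_subset ha'pos
      have hβ : ⟪a', a'⟫_ℝ ≠ 0 := fun h =>
        hRS.zero_not_mem (inner_self_eq_zero.mp h ▸ ha'Φ)
      have htlen : t.length ≤ n := Nat.succ_le_succ_iff.mp hl
      obtain ⟨t', ht'nd, ht'pos, ht'eq, ht'len⟩ :=
        ih t htlen (fun α hα => hmem α (List.mem_cons_of_mem _ hα))
      by_cases hmem' : a' ∈ t'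
      · obtain ⟨u, v, huv⟩ := List.append_of_mem hmem'
        set m : List E := u.map (reflW a') ++ v with hm
        have hmΦ : ∀ α ∈ m, α ∈ Φ := by
          intro α hα
          rcases List.mem_append.mp hα with h | h
          · obtain ⟨δ, hδ, rfl⟩ := List.mem_map.mp h
            exact hRS.refl_mem δ
              (hRS.pos_subset (ht'pos δ (by rw [huv]; exact List.mem_append_left _ hδ)))
              a' ha'Φ
          · exact hRS.pos_subset (ht'pos α (by
              rw [huv]; exact List.mem_append_right _ (List.mem_cons_of_mem _ h)))
        have hmlen : m.length + 1 = t'.length := by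
          simp [hm, huv, List.length_append]; omega
        have hmlen' : m.length ≤ n := by omega
        obtain ⟨l'', hnd, hpos, heq, hlen⟩ := ih m hmlen' hmΦ
        refine ⟨l'', hnd, hpos, ?_, ?_⟩
        · calc wprod (a :: t) = reflW a ∘ wprod t := rfl
            _ = reflW a' ∘ wprod t' := by rw [ha'refl, ht'eq]
            _ = wprod m := by rw [huv]; exact wprod_cancel hβ u v
            _ = wprod l'' := heq
        · simp only [List.length_cons]
          omega
      · refine ⟨a' :: t', List.nodup_cons.mpr ⟨hmem', ht'nd⟩, ?_, ?_, ?_⟩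
        · intro β hβ'
          rcases List.mem_cons.mp hβ' with rfl | h
          · exact ha'pos
          · exact ht'pos β h
        · calc wprod (a :: t) = reflW a ∘ wprod t := rfl
            _ = reflW a' ∘ wprod t' := by rw [ha'refl, ht'eq]
            _ = wprod (a' :: t') := rfl
        · simp only [List.length_cons]; omega

/-- every element of the Weyl group `W` of `Φ` is a product of
reflections `s_{β_l} ⋯ s_{β_1}` for pairwise distinct positive roots `β_i`. -/
theorem stmt5 (Φ Φpos : Finset E) (hRS : IsRootSystem Φ Φpos) (w : E → E)
    (hw : memW Φ w) :
    ∃ l : List E, l.Nodup ∧ (∀ β ∈ l, β ∈ Φpos) ∧ w = wprod l := by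
  obtain ⟨l, hl, rfl⟩ := hw
  obtain ⟨l', hnd, hpos, heq, -⟩ := key_lemma hRS l.length l (le_refl _) hl
  exact ⟨l', hnd, hpos, heq⟩
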